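/- For S a power of two with S ≥ 2 and n ≥ 2, the hierarchical-merging cost T(S,n) = Σ_{i=1}^{log₂ S} (S/2^i) · 2k·(2^{i-1}n)·log₂(2^{i-1}n) satisfies T(S,n) ≤ S·k·n·log₂ S · ((log₂ S − 1)/2 + log₂ n). -/

import Mathlib

/-!
The bound holds with equality. In round `i` the `S / 2^i` merges of tables of size `2^(i-1) n`
cost `S k n (i - 1 + log₂ n)` in total, since `log₂ (2^(i-1) n) = (i - 1) + log₂ n`;
summing over `i = 1, …, log₂ S` is an arithmetic series.
-/

open Finset Real

lemma logb_two_pow_mul (m : ℕ) {x : ℝ} (hx : x ≠ 0) :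
    logb 2 (2 ^ m * x) = m + logb 2 x := by
  rw [logb_mul (by positivity) hx, logb_pow, logb_self_eq_one one_lt_two, mul_one]

lemma sum_Icc_one_sub_one_add (h : ℕ) (c : ℝ) :
    ∑ i ∈ Icc 1 h, ((i : ℝ) - 1 + c) = h * ((h - 1) / 2 + c) := by
  induction h with
  | zero => simp
  | succ m ih =>
    rw [sum_Icc_succ_top (by omega), ih]
    push_cast
    ring

lemma merge_round_cost (h : ℕ) {i : ℕ} (hi : 1 ≤ i) (n k : ℝ) :
    (2 ^ h / 2 ^ i) * (2 * k * (2 ^ (i - 1) * n) * logb 2 (2 ^ (i - 1) * n)) =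
      2 ^ h * k * n * ((i : ℝ) - 1 + logb 2 n) := by
  rcases eq_or_ne n 0 with rfl | hn
  · simp
  obtain ⟨j, rfl⟩ : ∃ j, i = j + 1 := ⟨i - 1, by omega⟩
  rw [Nat.add_sub_cancel, logb_two_pow_mul j hn, pow_succ]
  push_cast
  field_simp
  ring

open Finset in
theorem hierarchical_merging_cost_general (h : ℕ) (n k : ℝ)
    (S : ℝ) (hS : S = 2 ^ h) :
    ∑ i ∈ Finset.Icc 1 h,
        (S / 2 ^ i) * (2 * k * (2 ^ (i - 1) * n) * Real.logb 2 (2 ^ (i - 1) * n)) ≤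
      S * k * n * Real.logb 2 S * ((Real.logb 2 S - 1) / 2 + Real.logb 2 n) := by
  subst hS
  have hlogS : logb 2 ((2 : ℝ) ^ h) = h := by
    rw [logb_pow, logb_self_eq_one one_lt_two, mul_one]
  rw [sum_congr rfl fun i hi => merge_round_cost h (mem_Icc.1 hi).1 n k, ← mul_sum,
    sum_Icc_one_sub_one_add, hlogS]
  exact le_of_eq (by ring)

open Finset in
/-- Hierarchical merging cost bound: for `S = 2^h`, `h ≥ 1`, `n ≥ 2`, `k ≥ 1`,
`T(S,n) = Σ_{i=1}^{h} (S/2^i)·2k·(2^{i-1} n)·log₂(2^{i-1} n)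
  ≤ S k n log₂ S ((log₂ S − 1)/2 + log₂ n)`. -/
theorem hierarchical_merging_cost (h : ℕ) (hh : 1 ≤ h) (n k : ℝ) (hn : 2 ≤ n) (hk : 1 ≤ k)
    (S : ℝ) (hS : S = 2 ^ h) :
    ∑ i ∈ Finset.Icc 1 h,
        (S / 2 ^ i) * (2 * k * (2 ^ (i - 1) * n) * Real.logb 2 (2 ^ (i - 1) * n)) ≤
      S * k * n * Real.logb 2 S * ((Real.logb 2 S - 1) / 2 + Real.logb 2 n) :=
  hierarchical_merging_cost_general h n k S hS
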